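/- For every bounded bilinear form A : c₀ × c₀ → ℂ, the diagonal sum ∑_{i=1}^∞ |A(e_i, e_i)| is at most ‖A‖. -/

import Mathlib

/-! Averaging over all sign vectors `σ ∈ {±1}ⁿ`, the vectors `x_σ = ∑ σᵢ eᵢ` and
`y_σ = ∑ σⱼ dⱼ eⱼ` (with `|dⱼ| ≤ 1`) lie in the unit ball of `c₀`, and the mean of `A(x_σ, y_σ)`
kills the off-diagonal terms, leaving `∑ dᵢ A(eᵢ, eᵢ)`. Choosing unimodular `dᵢ` with
`dᵢ A(eᵢ, eᵢ) = |A(eᵢ, eᵢ)|` bounds every partial diagonal sum by `‖A‖`. -/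

open scoped ENNReal

noncomputable section

/-- The canonical basis vector `e i` of `c₀`, the space of complex null sequences. -/
def c0e (i : ℕ) : ZeroAtInftyContinuousMap ℕ ℂ :=
  { toContinuousMap := ⟨fun j => if j = i then 1 else 0, continuous_of_discreteTopology⟩
    zero_at_infty' := by
      refine Filter.Tendsto.congr' ?_ tendsto_const_nhds
      filter_upwards [Filter.mem_cocompact.mpr ⟨{i}, isCompact_singleton, subset_rfl⟩] with j hj
      simp only [Set.mem_compl_iff, Set.mem_singleton_iff] at hj
      simp [hj] }

section Signs

variable {ι : Type*} [Fintype ι] [DecidableEq ι]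

theorem sum_units_int_apply_mul_apply (i j : ι) :
    ∑ σ : ι → ℤˣ, (σ i : ℤ) * σ j = if i = j then (Fintype.card (ι → ℤˣ) : ℤ) else 0 := by
  split_ifs with hij
  · subst hij
    simp [← Units.val_mul, Int.units_mul_self]
  · let flip (σ : ι → ℤˣ) : ι → ℤˣ := Function.update σ i (-σ i)
    have hflip : Function.Involutive flip := fun σ => by simp [flip]
    have hneg (σ : ι → ℤˣ) : (flip σ i : ℤ) * flip σ j = -((σ i : ℤ) * σ j) := by
      simp [flip, Function.update_of_ne (Ne.symm hij)]
    have := Equiv.sum_comp (hflip.toPerm flip) (fun σ : ι → ℤˣ => (σ i : ℤ) * σ j)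
    simp only [Function.Involutive.coe_toPerm, hneg, Finset.sum_neg_distrib] at this
    omega

theorem LinearMap.sum_units_int_apply_sum_zsmul {R M N P : Type*} [CommRing R] [AddCommGroup M]
    [AddCommGroup N] [AddCommGroup P] [Module R M] [Module R N] [Module R P]
    (B : M →ₗ[R] N →ₗ[R] P) (u : ι → M) (v : ι → N) :
    ∑ σ : ι → ℤˣ, B (∑ i, (σ i : ℤ) • u i) (∑ j, (σ j : ℤ) • v j) =
      Fintype.card (ι → ℤˣ) • ∑ i, B (u i) (v i) := by
  simp only [map_sum, map_zsmul, LinearMap.sum_apply, LinearMap.smul_apply, Finset.smul_sum,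
    smul_smul]
  rw [Finset.sum_comm]
  refine (Finset.sum_congr rfl fun j _ => Finset.sum_comm).trans ?_
  simp only [← Finset.sum_smul, sum_units_int_apply_mul_apply, ite_smul, zero_smul,
    Finset.sum_ite_eq, Finset.mem_univ, if_true, natCast_zsmul]

end Signs

namespace ContinuousMultilinearMap

variable {𝕜 E F : Type*} [NontriviallyNormedField 𝕜] [NormedAddCommGroup E] [NormedSpace 𝕜 E]
  [NormedAddCommGroup F] [NormedSpace 𝕜 F]

def curryFinTwo (A : ContinuousMultilinearMap 𝕜 (fun _ : Fin 2 => E) F) : E →L[𝕜] E →L[𝕜] F :=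
  (continuousMultilinearCurryFin1 𝕜 E F).toLinearIsometry.toContinuousLinearMap.comp A.curryLeft

theorem curryFinTwo_apply (A : ContinuousMultilinearMap 𝕜 (fun _ : Fin 2 => E) F) (x y : E) :
    A.curryFinTwo x y = A ![x, y] := by
  simp [curryFinTwo, curryLeft_apply]

theorem norm_curryFinTwo (A : ContinuousMultilinearMap 𝕜 (fun _ : Fin 2 => E) F) :
    ‖A.curryFinTwo‖ = ‖A‖ := by
  rw [curryFinTwo, LinearIsometry.norm_toContinuousLinearMap_comp, curryLeft_norm]

end ContinuousMultilinearMap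

namespace ContinuousLinearMap

variable {𝕜 E : Type*} [RCLike 𝕜] [NormedAddCommGroup E] [NormedSpace 𝕜 E]
  {ι : Type*} [Fintype ι]

theorem norm_sum_apply_smul_le {F : Type*} [NormedAddCommGroup F] [NormedSpace 𝕜 F]
    (B : E →L[𝕜] E →L[𝕜] F) {e : ι → E}
    (he : ∀ a : ι → 𝕜, ‖∑ i, a i • e i‖ ≤ ‖a‖) {d : ι → 𝕜} (hd : ∀ i, ‖d i‖ ≤ 1) :
    ‖∑ i, B (e i) (d i • e i)‖ ≤ ‖B‖ := by
  classical
  have hsign (σ : ι → ℤˣ) {a : ι → 𝕜} (ha : ∀ i, ‖a i‖ ≤ 1) :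
      ‖∑ i, (σ i : ℤ) • a i • e i‖ ≤ 1 := by
    simp only [← Int.cast_smul_eq_zsmul 𝕜, smul_smul]
    refine (he _).trans (pi_norm_le_iff_of_nonneg zero_le_one |>.2 fun i => ?_)
    rcases Int.units_eq_one_or (σ i) with h | h <;> simpa [h] using ha i
  let x (σ : ι → ℤˣ) : E := ∑ i, (σ i : ℤ) • e i
  let y (σ : ι → ℤˣ) : E := ∑ i, (σ i : ℤ) • d i • e i
  have hx (σ : ι → ℤˣ) : ‖x σ‖ ≤ 1 := by simpa using hsign σ (a := fun _ => 1) (by simp)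
  have hy (σ : ι → ℤˣ) : ‖y σ‖ ≤ 1 := hsign σ hd
  have hxy (σ : ι → ℤˣ) : ‖B (x σ) (y σ)‖ ≤ ‖B‖ :=
    calc ‖B (x σ) (y σ)‖ ≤ ‖B‖ * ‖x σ‖ * ‖y σ‖ := B.le_opNorm₂ _ _
      _ ≤ ‖B‖ * 1 * 1 := by gcongr <;> simp only [hx, hy]
      _ = ‖B‖ := by ring
  have havg := B.toLinearMap₁₂.sum_units_int_apply_sum_zsmul e (fun i => d i • e i)
  simp only [toLinearMap₁₂_apply_apply_apply] at havg
  refine le_of_mul_le_mul_left ?_ (Nat.cast_pos.2 (Fintype.card_pos (α := ι → ℤˣ)))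
  calc (Fintype.card (ι → ℤˣ) : ℝ) * ‖∑ i, B (e i) (d i • e i)‖ = ‖∑ σ, B (x σ) (y σ)‖ := by
        rw [havg, RCLike.norm_nsmul 𝕜, nsmul_eq_mul]
    _ ≤ ∑ σ, ‖B (x σ) (y σ)‖ := norm_sum_le _ _
    _ ≤ ∑ _σ : ι → ℤˣ, ‖B‖ := Finset.sum_le_sum fun σ _ => hxy σ
    _ = Fintype.card (ι → ℤˣ) * ‖B‖ := by simp

theorem sum_norm_apply_self_le (B : E →L[𝕜] E →L[𝕜] 𝕜) {e : ι → E}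
    (he : ∀ a : ι → 𝕜, ‖∑ i, a i • e i‖ ≤ ‖a‖) : ∑ i, ‖B (e i) (e i)‖ ≤ ‖B‖ := by
  choose d hd_norm hd using fun i => RCLike.exists_norm_eq_mul_self (B (e i) (e i))
  calc ∑ i, ‖B (e i) (e i)‖ = RCLike.re (∑ i, B (e i) (d i • e i)) := by
        simp only [map_smul, smul_eq_mul, ← hd, map_sum, RCLike.ofReal_re]
    _ ≤ ‖∑ i, B (e i) (d i • e i)‖ := RCLike.re_le_norm _
    _ ≤ ‖B‖ := B.norm_sum_apply_smul_le he fun i => (hd_norm i).le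

end ContinuousLinearMap

theorem ZeroAtInftyContinuousMap.sum_apply {α β ι : Type*} [TopologicalSpace α]
    [AddCommMonoid β] [TopologicalSpace β] [ContinuousAdd β] (s : Finset ι)
    (f : ι → ZeroAtInftyContinuousMap α β) (x : α) : (∑ i ∈ s, f i) x = ∑ i ∈ s, f i x :=
  map_sum ({ toFun := fun g => g x, map_zero' := rfl, map_add' := fun _ _ => rfl } :
    ZeroAtInftyContinuousMap α β →+ β) f s

theorem c0e_apply (i j : ℕ) : c0e i j = if j = i then 1 else 0 := rfl

theorem norm_sum_smul_c0e_le {ι : Type*} [Fintype ι] {g : ι → ℕ} (hg : Function.Injective g)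
    (a : ι → ℂ) : ‖∑ i, a i • c0e (g i)‖ ≤ ‖a‖ := by
  rw [← ZeroAtInftyContinuousMap.norm_toBCF_eq_norm,
    BoundedContinuousFunction.norm_le (norm_nonneg a)]
  intro n
  change ‖(∑ i, a i • c0e (g i)) n‖ ≤ ‖a‖
  simp only [ZeroAtInftyContinuousMap.sum_apply, ZeroAtInftyContinuousMap.smul_apply, c0e_apply,
    smul_eq_mul, mul_ite, mul_one, mul_zero]
  by_cases hn : ∃ i, g i = n
  · obtain ⟨i, rfl⟩ := hn
    rw [Fintype.sum_eq_single i fun j hj => if_neg (hg.ne hj).symm, if_pos rfl]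
    exact norm_le_pi_norm a i
  · simp only [not_exists] at hn
    rw [Finset.sum_eq_zero fun i _ => if_neg fun h => hn i h.symm, norm_zero]
    exact norm_nonneg a

/-- For every bounded bilinear form `A : c₀ × c₀ → ℂ`, the diagonal sum
`∑_i |A(e_i, e_i)|` is at most `‖A‖`. -/
theorem diagonal_sum_le_norm
    (A : ContinuousMultilinearMap ℂ (fun _ : Fin 2 => ZeroAtInftyContinuousMap ℕ ℂ) ℂ) :
    Summable (fun i : ℕ => ‖A ![c0e i, c0e i]‖) ∧
      ∑' i : ℕ, ‖A ![c0e i, c0e i]‖ ≤ ‖A‖ := by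
  have hpartial (n : ℕ) : ∑ i ∈ Finset.range n, ‖A ![c0e i, c0e i]‖ ≤ ‖A‖ := by
    rw [← Fin.sum_univ_eq_sum_range (fun i => ‖A ![c0e i, c0e i]‖), ← A.norm_curryFinTwo]
    simp only [← A.curryFinTwo_apply]
    exact A.curryFinTwo.sum_norm_apply_self_le (norm_sum_smul_c0e_le Fin.val_injective)
  exact ⟨summable_of_sum_range_le (fun _ => norm_nonneg _) hpartial,
    Real.tsum_le_of_sum_range_le (fun _ => norm_nonneg _) hpartial⟩

end
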